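/- Let c ≥ 1 and d be integers, let v ∈ ℂ be purely imaginary, and let s ∈ ℂ with Re s > 1. Then Σ_{n=1}^{∞} τ_v(n) e(nd/c) n^{−s} = c^{−2s} · Σ_{a=1}^{c} Σ_{b=1}^{c} e(ab·d/c) · ζ(s−v; a/c) · ζ(s+v; b/c), where both sides converge absolutely. -/

import Mathlib

noncomputable section

open Finset

/-- `τ_v(n) = Σ_{n₁n₂ = n} (n₁/n₂)^v`, written as a sum over the divisors `n₁` of `n`
with complementary divisor `n₂ = n/n₁`. -/
def tauv (v : ℂ) (n : ℕ) : ℂ :=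
  ∑ d ∈ n.divisors, ((d : ℂ) / ((n / d : ℕ) : ℂ)) ^ v

/-- `e(x) = exp(2πix)`. -/
def e (x : ℝ) : ℂ := Complex.exp (2 * Real.pi * Complex.I * x)

/-- The Hurwitz zeta series `ζ(w; θ) = Σ_{n=0}^∞ (n+θ)^{−w}` (convergent for `Re w > 1`). -/
def hzeta (w : ℂ) (θ : ℝ) : ℂ := ∑' n : ℕ, ((n : ℂ) + θ) ^ (-w)

namespace Tauv17

lemma norm_e (x : ℝ) : ‖e x‖ = 1 := by
  rw [e, Complex.norm_exp]
  norm_num [Complex.mul_re, Complex.mul_im]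

lemma e_add_int (x : ℝ) (m : ℤ) : e (x + m) = e x := by
  rw [e, e]
  push_cast
  rw [mul_add, Complex.exp_add,
    show 2 * (Real.pi:ℂ) * Complex.I * (m:ℂ) = (m:ℂ) * (2 * Real.pi * Complex.I) by ring,
    Complex.exp_int_mul_two_pi_mul_I, mul_one]

lemma e_period {c : ℕ} (hc : 0 < c) (d : ℤ) (ab k : ℕ) :
    e (((ab + c * k : ℕ) : ℝ) * d / c) = e (((ab : ℕ) : ℝ) * d / c) := by
  have hc' : (c:ℝ) ≠ 0 := Nat.cast_ne_zero.mpr hc.ne'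
  have harg : ((ab + c * k : ℕ) : ℝ) * d / c = (ab : ℝ) * d / c + ((k * d : ℤ) : ℝ) := by
    push_cast
    field_simp
  rw [harg, e_add_int]

lemma summable_norm_hurwitz {w : ℂ} (hw : 1 < w.re) {θ : ℝ} (hθ : 0 < θ) :
    Summable fun n : ℕ => ‖((n : ℂ) + θ) ^ (-w)‖ := by
  have h := (Real.summable_one_div_nat_add_rpow θ w.re).mpr hw
  refine h.congr fun n => ?_
  have hpos : 0 < (n:ℝ) + θ := by positivity
  rw [show ((n:ℂ) + θ) = (((n:ℝ)+θ : ℝ):ℂ) by push_cast; ring,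
    Complex.norm_cpow_eq_rpow_re_of_pos hpos, Complex.neg_re,
    Real.rpow_neg hpos.le, abs_of_pos hpos, one_div]

lemma summable_norm_cpow_shift {w : ℂ} (hw : w.re < -1) :
    Summable fun i : ℕ => ‖((i+1:ℕ):ℂ) ^ w‖ := by
  have h : Summable fun n : ℕ => ((n:ℝ)) ^ w.re := Real.summable_nat_rpow.mpr hw
  have h2 := (summable_nat_add_iff 1).mpr h
  refine h2.congr fun n => ?_
  rw [Complex.norm_natCast_cpow_of_pos (Nat.succ_pos n)]

lemma summable_norm_cpow_res {w : ℂ} (hw : w.re < -1) {c a : ℕ} (hc : 0 < c) (ha : 0 < a) :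
    Summable fun q : ℕ => ‖((q * c + a : ℕ):ℂ) ^ w‖ := by
  have hinj : Function.Injective fun q : ℕ => q * c + (a - 1) :=
    fun x y h => Nat.eq_of_mul_eq_mul_right hc (Nat.add_right_cancel h)
  have h := (summable_norm_cpow_shift hw).comp_injective hinj
  refine h.congr fun q => ?_
  simp only [Function.comp_apply]
  rw [add_assoc, Nat.sub_add_cancel ha]

def divEquiv : ℕ × ℕ ≃ (Σ n : ℕ, {p : ℕ × ℕ // p ∈ (n+1).divisorsAntidiagonal}) where
  toFun p := ⟨(p.1+1)*(p.2+1)-1, ⟨(p.1+1, p.2+1), by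
    rw [Nat.mem_divisorsAntidiagonal]
    dsimp only
    have h1 : 1 ≤ (p.1+1)*(p.2+1) := Nat.one_le_iff_ne_zero.mpr (by positivity)
    omega⟩⟩
  invFun x := (x.2.1.1 - 1, x.2.1.2 - 1)
  left_inv p := by simp
  right_inv := by
    rintro ⟨n, ⟨⟨d1, d2⟩, hd⟩⟩
    rw [Nat.mem_divisorsAntidiagonal] at hd
    have hpos : 0 < d1 * d2 := by rw [hd.1]; omega
    have h1 : 0 < d1 := Nat.pos_of_ne_zero (by rintro rfl; simp at hpos)
    have h2 : 0 < d2 := Nat.pos_of_ne_zero (by rintro rfl; simp at hpos)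
    apply Sigma.subtype_ext
    · show (d1 - 1 + 1) * (d2 - 1 + 1) - 1 = n
      rw [Nat.sub_add_cancel h1, Nat.sub_add_cancel h2, hd.1]; omega
    · show ((d1 - 1 + 1), (d2 - 1 + 1)) = (d1, d2)
      rw [Nat.sub_add_cancel h1, Nat.sub_add_cancel h2]

lemma fiber_hasSum {M : Type*} [NormedAddCommGroup M] [CompleteSpace M]
    (g : ℕ × ℕ → M) (hg : Summable g) :
    HasSum (fun n : ℕ => ∑ p ∈ (n+1).divisorsAntidiagonal, g (p.1 - 1, p.2 - 1)) (∑' p, g p) := by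
  have h2 := divEquiv.symm.hasSum_iff.mpr hg.hasSum
  refine h2.sigma fun n => ?_
  have h3 := hasSum_fintype (fun p : {p : ℕ × ℕ // p ∈ (n+1).divisorsAntidiagonal} =>
    g (p.1.1 - 1, p.1.2 - 1))
  rw [Finset.sum_coe_sort ((n+1).divisorsAntidiagonal) (fun p => g (p.1 - 1, p.2 - 1))] at h3
  exact h3

def resEquiv (c : ℕ) [NeZero c] : (Fin c × Fin c) × (ℕ × ℕ) ≃ ℕ × ℕ where
  toFun x := (x.2.1 * c + x.1.1, x.2.2 * c + x.1.2)
  invFun p := ((⟨p.1 % c, Nat.mod_lt _ c.pos_of_neZero⟩, ⟨p.2 % c, Nat.mod_lt _ c.pos_of_neZero⟩),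
    (p.1 / c, p.2 / c))
  left_inv := by
    rintro ⟨⟨r1, r2⟩, ⟨q1, q2⟩⟩
    have e1 : ∀ (q : ℕ) (r : Fin c), (q * c + ↑r) % c = ↑r := fun q r => by
      rw [mul_comm, Nat.mul_add_mod, Nat.mod_eq_of_lt r.is_lt]
    have e2 : ∀ (q : ℕ) (r : Fin c), (q * c + ↑r) / c = q := fun q r => by
      rw [add_comm, Nat.add_mul_div_right _ _ c.pos_of_neZero, Nat.div_eq_of_lt r.is_lt, zero_add]
    simp [Prod.ext_iff, Fin.ext_iff, e1, e2]
  right_inv := by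
    rintro ⟨n1, n2⟩
    simp [Prod.ext_iff, mul_comm, Nat.div_add_mod]

lemma tsum_res (c : ℕ) [NeZero c] (g : ℕ × ℕ → ℂ) (hg : Summable g) :
    ∑' p : ℕ × ℕ, g p =
      ∑ r1 : Fin c, ∑ r2 : Fin c, ∑' q : ℕ × ℕ, g (q.1 * c + r1, q.2 * c + r2) := by
  have hsum : Summable (fun x => g (resEquiv c x)) := (resEquiv c).summable_iff.mpr hg
  rw [← (resEquiv c).tsum_eq g,
    Summable.tsum_prod' hsum (fun b => hsum.comp_injective (fun x y h => by simpa using h)),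
    tsum_fintype, Fintype.sum_prod_type]
  rfl

lemma cpow_div_mul (v s : ℂ) {n1 n2 : ℕ} (h1 : 0 < n1) (h2 : 0 < n2) :
    ((n1:ℂ) / (n2:ℂ)) ^ v / ((n1 * n2 : ℕ):ℂ) ^ s
      = (n1:ℂ) ^ (v - s) * (n2:ℂ) ^ (-(v + s)) := by
  have h1' : (n1:ℂ) ≠ 0 := Nat.cast_ne_zero.mpr h1.ne'
  have h2' : (n2:ℂ) ≠ 0 := Nat.cast_ne_zero.mpr h2.ne'
  have harg : ((n2:ℂ)).arg ≠ Real.pi := by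
    rw [Complex.natCast_arg]
    exact Real.pi_ne_zero.symm
  have hdiv : ((n1:ℂ) / (n2:ℂ)) ^ v = (n1:ℂ) ^ v * (n2:ℂ) ^ (-v) := by
    rw [div_eq_mul_inv, ← Complex.ofReal_natCast n1, ← Complex.ofReal_natCast n2,
      ← Complex.ofReal_inv, Complex.mul_cpow_ofReal_nonneg (Nat.cast_nonneg n1)
        (by positivity), Complex.ofReal_inv, Complex.ofReal_natCast,
      Complex.ofReal_natCast, Complex.inv_cpow _ _ harg, ← Complex.cpow_neg]
  have hmul : ((n1 * n2 : ℕ):ℂ) ^ s = (n1:ℂ) ^ s * (n2:ℂ) ^ s := by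
    push_cast
    rw [← Complex.ofReal_natCast n1, ← Complex.ofReal_natCast n2,
      Complex.mul_cpow_ofReal_nonneg (Nat.cast_nonneg n1) (Nat.cast_nonneg n2)]
  rw [hdiv, hmul, Complex.cpow_sub _ _ h1', show -(v+s) = -v - s by ring,
    Complex.cpow_sub _ _ h2']
  have hs1 : (n1:ℂ) ^ s ≠ 0 := by
    rw [Ne, Complex.cpow_eq_zero_iff]; tauto
  have hs2 : (n2:ℂ) ^ s ≠ 0 := by
    rw [Ne, Complex.cpow_eq_zero_iff]; tauto
  field_simp

lemma tsum_shift_cpow (w : ℂ) {c a : ℕ} (hc : 0 < c) :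
    ∑' q : ℕ, ((q * c + a : ℕ):ℂ) ^ w = (c:ℂ) ^ w * hzeta (-w) ((a:ℝ)/c) := by
  rw [hzeta, ← tsum_mul_left]
  refine tsum_congr fun q => ?_
  have hb : ((q * c + a : ℕ):ℂ) = (((c:ℝ)):ℂ) * ((((q:ℝ) + (a:ℝ)/c) : ℝ):ℂ) := by
    push_cast
    rw [mul_add, mul_div_cancel₀ _ (show (c:ℂ) ≠ 0 from Nat.cast_ne_zero.mpr hc.ne')]
    ring
  have hbase : ((((q:ℝ) + (a:ℝ)/c) : ℝ):ℂ) = (q:ℂ) + (((a:ℝ)/c : ℝ):ℂ) := by push_cast; ring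
  rw [hb, Complex.mul_cpow_ofReal_nonneg (Nat.cast_nonneg c) (by positivity), neg_neg, hbase,
    Complex.ofReal_natCast]

end Tauv17

open Tauv17 in
/-- for `c ≥ 1`, `d ∈ ℤ`, `v` purely imaginary and `Re s > 1`,
`Σ_{n≥1} τ_v(n) e(nd/c) n^{−s} = c^{−2s} Σ_{a=1}^c Σ_{b=1}^c e(abd/c) ζ(s−v; a/c) ζ(s+v; b/c)`,
with both sides converging absolutely. -/
theorem tauv_series_eq_hurwitz_double_sum
    (c : ℕ) (hc : 1 ≤ c) (d : ℤ) (v s : ℂ) (hv : v.re = 0) (hs : 1 < s.re) :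
    Summable (fun n : ℕ =>
      ‖tauv v (n + 1) * e (((n + 1 : ℕ) : ℝ) * d / c) / ((n + 1 : ℕ) : ℂ) ^ s‖) ∧
    (∀ θ : ℝ, θ ∈ Set.Ioc (0 : ℝ) 1 →
      Summable (fun n : ℕ => ‖((n : ℂ) + θ) ^ (-(s - v))‖) ∧
      Summable (fun n : ℕ => ‖((n : ℂ) + θ) ^ (-(s + v))‖)) ∧
    (∑' n : ℕ, tauv v (n + 1) * e (((n + 1 : ℕ) : ℝ) * d / c) / ((n + 1 : ℕ) : ℂ) ^ s)
      = (c : ℂ) ^ (-(2 * s)) *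
        ∑ a ∈ Finset.Icc 1 c, ∑ b ∈ Finset.Icc 1 c,
          e (((a * b : ℕ) : ℝ) * d / c) * hzeta (s - v) ((a : ℝ) / c) *
            hzeta (s + v) ((b : ℝ) / c) := by
  haveI : NeZero c := ⟨by omega⟩
  have hcpos : 0 < c := hc
  have hre1 : (v - s).re < -1 := by simp only [Complex.sub_re, hv]; linarith
  have hre2 : (-(v + s)).re < -1 := by
    simp only [Complex.neg_re, Complex.add_re, hv]; linarith
  set g : ℕ × ℕ → ℂ := fun p =>
    ((p.1 + 1 : ℕ):ℂ) ^ (v - s) * ((p.2 + 1 : ℕ):ℂ) ^ (-(v + s)) *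
      e ((((p.1 + 1) * (p.2 + 1) : ℕ):ℝ) * d / c) with hgdef
  have hA := summable_norm_cpow_shift hre1
  have hB := summable_norm_cpow_shift hre2
  have hgnorm : Summable fun p : ℕ × ℕ => ‖g p‖ := by
    have h := hA.mul_of_nonneg hB (fun i => norm_nonneg _) (fun i => norm_nonneg _)
    refine h.congr fun p => ?_
    rw [hgdef]
    simp only [norm_mul, norm_e, mul_one]
  have hg : Summable g := hgnorm.of_norm
  -- term identity
  have hterm : ∀ n : ℕ, tauv v (n+1) * e (((n+1:ℕ):ℝ) * d / c) / ((n+1:ℕ):ℂ) ^ s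
      = ∑ p ∈ (n+1).divisorsAntidiagonal, g (p.1 - 1, p.2 - 1) := by
    intro n
    rw [tauv, ← Nat.sum_divisorsAntidiagonal (fun d1 d2 => ((d1:ℂ)/(d2:ℂ)) ^ v),
      Finset.sum_mul, Finset.sum_div]
    refine Finset.sum_congr rfl fun p hp => ?_
    rw [Nat.mem_divisorsAntidiagonal] at hp
    have hp1 : 0 < p.1 := Nat.pos_of_ne_zero (by intro h; rw [h] at hp; simp at hp)
    have hp2 : 0 < p.2 := Nat.pos_of_ne_zero (by intro h; rw [h] at hp; simp at hp)
    have hn : p.1 * p.2 = n + 1 := hp.1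
    have hgval : g (p.1 - 1, p.2 - 1)
        = (p.1:ℂ) ^ (v - s) * (p.2:ℂ) ^ (-(v + s)) * e (((p.1 * p.2 : ℕ):ℝ) * d / c) := by
      simp only [hgdef, Nat.sub_add_cancel hp1, Nat.sub_add_cancel hp2]
    rw [hgval, show ((n+1:ℕ):ℂ) = ((p.1 * p.2 : ℕ):ℂ) by rw [hn],
      show ((n+1:ℕ):ℝ) = ((p.1 * p.2 : ℕ):ℝ) by rw [hn],
      mul_div_right_comm, cpow_div_mul v s hp1 hp2]
  have key := fiber_hasSum g hg
  have keyN := fiber_hasSum (fun p => ‖g p‖) hgnorm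
  refine ⟨?_, ?_, ?_⟩
  · refine Summable.of_nonneg_of_le (fun n => norm_nonneg _) (fun n => ?_) keyN.summable
    rw [hterm n]
    exact norm_sum_le _ _
  · intro θ hθ
    constructor
    · exact summable_norm_hurwitz (by rw [Complex.sub_re, hv, sub_zero]; exact hs) hθ.1
    · exact summable_norm_hurwitz (by rw [Complex.add_re, hv, add_zero]; exact hs) hθ.1
  · rw [tsum_congr hterm, key.tsum_eq, tsum_res c g hg]
    set G : ℕ → ℕ → ℂ := fun a b => (c:ℂ) ^ (-(2*s)) * (e (((a * b : ℕ):ℝ) * d / c) *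
        hzeta (s - v) ((a:ℝ)/c) * hzeta (s + v) ((b:ℝ)/c)) with hG
    have inner : ∀ r1 r2 : Fin c,
        (∑' q : ℕ × ℕ, g (q.1 * c + r1, q.2 * c + r2)) = G ((r1:ℕ)+1) ((r2:ℕ)+1) := by
      intro r1 r2
      rw [hG]
      set a : ℕ := (r1:ℕ) + 1 with ha
      set b : ℕ := (r2:ℕ) + 1 with hb
      have hstep : ∀ q : ℕ × ℕ, g (q.1 * c + r1, q.2 * c + r2)
          = e (((a * b : ℕ):ℝ) * d / c) *
            (((q.1 * c + a : ℕ):ℂ) ^ (v - s) * ((q.2 * c + b : ℕ):ℂ) ^ (-(v + s))) := by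
        intro q
        have h1 : q.1 * c + (r1:ℕ) + 1 = q.1 * c + a := by omega
        have h2 : q.2 * c + (r2:ℕ) + 1 = q.2 * c + b := by omega
        have hmul : (q.1 * c + a) * (q.2 * c + b)
            = a * b + c * (q.1 * (q.2 * c) + q.1 * b + q.2 * a) := by ring
        simp only [hgdef, h1, h2, hmul, e_period hcpos]
        ring
      rw [tsum_congr hstep, tsum_mul_left]
      have hf1 := summable_norm_cpow_res hre1 hcpos (a := a) (by omega)
      have hf2 := summable_norm_cpow_res hre2 hcpos (a := b) (by omega)
      rw [← tsum_mul_tsum_of_summable_norm hf1 hf2,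
        tsum_shift_cpow (v - s) hcpos, tsum_shift_cpow (-(v + s)) hcpos,
        neg_sub, neg_neg]
      have hc0 : (c:ℂ) ≠ 0 := Nat.cast_ne_zero.mpr hcpos.ne'
      rw [show (c:ℂ) ^ (v - s) * hzeta (s - v) ((a:ℝ)/c) *
            ((c:ℂ) ^ (-(v + s)) * hzeta (v + s) ((b:ℝ)/c))
          = ((c:ℂ) ^ (v - s) * (c:ℂ) ^ (-(v + s))) *
            (hzeta (s - v) ((a:ℝ)/c) * hzeta (v + s) ((b:ℝ)/c)) by ring,
        ← Complex.cpow_add _ _ hc0, show v - s + -(v + s) = -(2*s) by ring,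
        show v + s = s + v by ring]
      ring
    have reidx : ∀ G0 : ℕ → ℂ, ∑ r : Fin c, G0 ((r:ℕ)+1) = ∑ a ∈ Finset.Icc 1 c, G0 a := by
      intro G0
      rw [Fin.sum_univ_eq_sum_range (fun i => G0 (i+1)) c]
      refine Finset.sum_nbij' (fun i => i + 1) (fun a => a - 1) ?_ ?_ ?_ ?_ ?_
      · intro i hi
        simp only [Finset.mem_range] at hi
        simp only [Finset.mem_Icc]
        omega
      · intro a0 ha0
        simp only [Finset.mem_Icc] at ha0
        simp only [Finset.mem_range]
        omega
      · intro i hi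
        omega
      · intro a0 ha0
        simp only [Finset.mem_Icc] at ha0
        omega
      · intro i hi
        rfl
    have reidx2 : (∑ r1 : Fin c, ∑ r2 : Fin c, G ((r1:ℕ)+1) ((r2:ℕ)+1))
        = ∑ a ∈ Finset.Icc 1 c, ∑ b ∈ Finset.Icc 1 c, G a b := by
      rw [reidx (fun a => ∑ r2 : Fin c, G a ((r2:ℕ)+1))]
      exact Finset.sum_congr rfl fun a _ => reidx (fun b => G a b)
    have step1 : (∑ r1 : Fin c, ∑ r2 : Fin c, ∑' q : ℕ × ℕ, g (q.1 * c + r1, q.2 * c + r2))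
        = ∑ r1 : Fin c, ∑ r2 : Fin c, G ((r1:ℕ)+1) ((r2:ℕ)+1) :=
      Finset.sum_congr rfl fun r1 _ => Finset.sum_congr rfl fun r2 _ => inner r1 r2
    rw [step1, reidx2]
    simp_rw [hG, Finset.mul_sum]
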